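/- Let δ : Ω̄ → (0,∞) satisfy the Hölder bound δ(y) ≤ δ(x) + M|x−y|^λ for all x,y ∈ Ω̄ with λ ∈ (0,1], and suppose for some x₀ and all 0 < r < r*, the integral ∫₀^{r*} r^{d−1} (δ(x₀) + M r^λ)^{−q} dr ≤ B. If λq > d, then δ(x₀)^q ≥ c or δ(x₀)^{q−d/λ} ≥ c for an explicit constant c depending on B, M, r*, d, q, λ; consequently δ(x₀) is bounded below by a positive constant depending only on these data. -/

import Mathlib

/-!
On `(0, R)` with `M R^λ ≤ δ` the weight `(δ + M r^λ)^{-q}` is at least `(2δ)^{-q}`, so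
`B ≥ (2δ)^{-q} R^d / d`. Cutting at `R = r*` when `M r*^λ ≤ δ`, and otherwise at the radius
`R = (δ/M)^{1/λ} < r*` where `M R^λ = δ`, gives `δ^q ≳ r*^d` or `δ^{q - d/λ} ≳ M^{-d/λ}`.
Both exponents `q` and `q - d/λ` are positive, so either alternative bounds `δ` from below.
-/

open MeasureTheory Set Real

lemma integral_Ioo_rpow_sub_one {s R : ℝ} (hs : 0 < s) (hR : 0 ≤ R) :
    ∫ r in Ioo 0 R, r ^ (s - 1) = R ^ s / s := by
  rw [← integral_Ioc_eq_integral_Ioo, ← intervalIntegral.integral_of_le hR,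
    integral_rpow (Or.inl (by linarith)), sub_add_cancel, zero_rpow hs.ne', sub_zero]

lemma integrableOn_Ioo_rpow_sub_one {s T : ℝ} (hs : 0 < s) (hT : 0 ≤ T) :
    IntegrableOn (fun r => r ^ (s - 1)) (Ioo 0 T) :=
  (intervalIntegrable_iff_integrableOn_Ioo_of_le hT).1
    (intervalIntegral.intervalIntegrable_rpow' (by linarith))

section HolderWeight

variable {s q lam M δ : ℝ}

lemma integrableOn_rpow_sub_one_mul_add_rpow_neg (hs : 0 < s) (hq : 0 ≤ q) (hM : 0 ≤ M)
    (hδ : 0 < δ) {T : ℝ} (hT : 0 ≤ T) :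
    IntegrableOn (fun r => r ^ (s - 1) * (δ + M * r ^ lam) ^ (-q)) (Ioo 0 T) := by
  have hdom : IntegrableOn (fun r : ℝ => r ^ (s - 1) * δ ^ (-q)) (Ioo 0 T) :=
    (integrableOn_Ioo_rpow_sub_one hs hT).mul_const _
  refine hdom.mono' (by fun_prop) ((ae_restrict_iff' measurableSet_Ioo).2 (ae_of_all _ ?_))
  rintro r ⟨hr, -⟩
  have hδle : δ ≤ δ + M * r ^ lam := le_add_of_nonneg_right (by positivity)
  rw [Real.norm_of_nonneg (mul_nonneg (by positivity) (by positivity))]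
  exact mul_le_mul_of_nonneg_left (rpow_le_rpow_of_nonpos hδ hδle (neg_nonpos.2 hq))
    (by positivity)

lemma rpow_le_of_setIntegral_le (hs : 0 < s) (hq : 0 ≤ q) (hlam : 0 ≤ lam) (hM : 0 ≤ M)
    (hδ : 0 < δ) {R T B : ℝ} (hR : 0 ≤ R) (hRT : R ≤ T) (hMR : M * R ^ lam ≤ δ)
    (hB : ∫ r in Ioo 0 T, r ^ (s - 1) * (δ + M * r ^ lam) ^ (-q) ≤ B) :
    R ^ s ≤ s * 2 ^ q * B * δ ^ q := by
  have hint {T' : ℝ} (hT' : 0 ≤ T') :=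
    integrableOn_rpow_sub_one_mul_add_rpow_neg (lam := lam) hs hq hM hδ hT'
  have hpt : ∀ r ∈ Ioo 0 R,
      (2 * δ) ^ (-q) * r ^ (s - 1) ≤ r ^ (s - 1) * (δ + M * r ^ lam) ^ (-q) := by
    rintro r ⟨hr, hrR⟩
    have hle : δ + M * r ^ lam ≤ 2 * δ := by
      have := mul_le_mul_of_nonneg_left (rpow_le_rpow hr.le hrR.le hlam) hM
      linarith
    rw [mul_comm]
    exact mul_le_mul_of_nonneg_left
      (rpow_le_rpow_of_nonpos (by positivity) hle (neg_nonpos.2 hq)) (by positivity)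
  have hlower : (2 * δ) ^ (-q) * (R ^ s / s) ≤ B := calc
    (2 * δ) ^ (-q) * (R ^ s / s) = ∫ r in Ioo 0 R, (2 * δ) ^ (-q) * r ^ (s - 1) := by
      rw [integral_const_mul, integral_Ioo_rpow_sub_one hs hR]
    _ ≤ ∫ r in Ioo 0 R, r ^ (s - 1) * (δ + M * r ^ lam) ^ (-q) :=
      setIntegral_mono_on
        ((integrableOn_Ioo_rpow_sub_one hs hR).const_mul _) (hint hR) measurableSet_Ioo hpt
    _ ≤ ∫ r in Ioo 0 T, r ^ (s - 1) * (δ + M * r ^ lam) ^ (-q) :=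
      setIntegral_mono_set (hint (hR.trans hRT))
        ((ae_restrict_iff' measurableSet_Ioo).2 (ae_of_all _ fun r hr => by
          have := hr.1; positivity))
        (Ioo_subset_Ioo_right hRT).eventuallyLE
    _ ≤ B := hB
  rw [rpow_neg (by positivity), mul_rpow zero_le_two hδ.le] at hlower
  rw [inv_mul_le_iff₀ (by positivity), div_le_iff₀ hs] at hlower
  linarith

lemma rpow_le_or_rpow_le_of_setIntegral_le (hs : 0 < s) (hq : 0 ≤ q) (hlam : 0 < lam)
    (hM : 0 < M) (hδ : 0 < δ) {T B : ℝ} (hT : 0 ≤ T)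
    (hB : ∫ r in Ioo 0 T, r ^ (s - 1) * (δ + M * r ^ lam) ^ (-q) ≤ B) :
    T ^ s ≤ s * 2 ^ q * B * δ ^ q ∨ M ^ (-(s / lam)) ≤ s * 2 ^ q * B * δ ^ (q - s / lam) := by
  rcases le_or_gt (M * T ^ lam) δ with hMT | hMT
  · exact Or.inl (rpow_le_of_setIntegral_le hs hq hlam.le hM.le hδ hT le_rfl hMT hB)
  right
  set R := (δ / M) ^ lam⁻¹
  have hMR : M * R ^ lam = δ := by
    rw [← rpow_mul (by positivity), inv_mul_cancel₀ hlam.ne', rpow_one, mul_div_cancel₀ _ hM.ne']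
  have hRT : R ≤ T := by
    rw [rpow_inv_le_iff_of_pos (by positivity) hT hlam, div_le_iff₀ hM]
    linarith
  have hbound := rpow_le_of_setIntegral_le hs hq hlam.le hM.le hδ (by positivity) hRT hMR.le hB
  have hRs : R ^ s = M ^ (-(s / lam)) * δ ^ (s / lam) := by
    rw [← rpow_mul (by positivity), div_rpow hδ.le hM.le, rpow_neg hM.le, inv_mul_eq_div,
      inv_mul_eq_div]
  have hδq : δ ^ q = δ ^ (q - s / lam) * δ ^ (s / lam) := by
    rw [← rpow_add hδ, sub_add_cancel]
  rw [hRs, hδq, ← mul_assoc] at hbound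
  exact le_of_mul_le_mul_right hbound (by positivity)

end HolderWeight

theorem stmt5_general (d : ℕ) (hd : 1 ≤ d) (q lam M rstar B : ℝ)
    (hq : 0 < q) (hlam : 0 < lam) (hM : 0 < M)
    (hr : 0 < rstar) (hB : 0 < B) (hlq : (d : ℝ) < lam * q) :
    ∃ c > 0, ∃ c' > 0, ∀ δ0 : ℝ, 0 < δ0 →
      (∫ r in Set.Ioo (0 : ℝ) rstar,
          r ^ ((d : ℝ) - 1) * (δ0 + M * r ^ lam) ^ (-q)) ≤ B →
      (c ≤ δ0 ^ q ∨ c ≤ δ0 ^ (q - (d : ℝ) / lam)) ∧ c' ≤ δ0 := by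
  have hd₀ : (0 : ℝ) < d := by exact_mod_cast hd
  have hexp : 0 < q - d / lam := sub_pos.2 ((div_lt_iff₀' hlam).2 hlq)
  set K := d * 2 ^ q * B
  have hK : 0 < K := by positivity
  set c₁ := rstar ^ (d : ℝ) / K
  set c₂ := M ^ (-(d / lam)) / K
  refine ⟨min c₁ c₂, by positivity, min (c₁ ^ q⁻¹) (c₂ ^ (q - d / lam)⁻¹), by positivity, ?_⟩
  intro δ hδ hint
  rcases rpow_le_or_rpow_le_of_setIntegral_le hd₀ hq.le hlam hM hδ hr.le hint with h | h
  · have hc : c₁ ≤ δ ^ q := by rw [div_le_iff₀ hK]; linarith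
    exact ⟨Or.inl ((min_le_left _ _).trans hc),
      (min_le_left _ _).trans ((rpow_inv_le_iff_of_pos (by positivity) hδ.le hq).2 hc)⟩
  · have hc : c₂ ≤ δ ^ (q - d / lam) := by rw [div_le_iff₀ hK]; linarith
    exact ⟨Or.inr ((min_le_right _ _).trans hc),
      (min_le_right _ _).trans ((rpow_inv_le_iff_of_pos (by positivity) hδ.le hexp).2 hc)⟩

/-- The core one-dimensional integral estimate in the Healey–Krömer lower bound:
if `∫₀^{r*} r^{d-1} (δ₀ + M r^λ)^{-q} dr ≤ B` and `λq > d`, then `δ₀^q` or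
`δ₀^{q - d/λ}` is bounded below by an explicit constant depending only on
`B, M, r*, d, q, λ`; consequently `δ₀` itself is uniformly bounded below. -/
theorem stmt5 (d : ℕ) (hd : 1 ≤ d) (q lam M rstar B : ℝ)
    (hq : 0 < q) (hlam : 0 < lam) (hlam1 : lam ≤ 1) (hM : 0 < M)
    (hr : 0 < rstar) (hB : 0 < B) (hlq : (d : ℝ) < lam * q) :
    ∃ c > 0, ∃ c' > 0, ∀ δ0 : ℝ, 0 < δ0 →
      (∫ r in Set.Ioo (0 : ℝ) rstar,
          r ^ ((d : ℝ) - 1) * (δ0 + M * r ^ lam) ^ (-q)) ≤ B →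
      (c ≤ δ0 ^ q ∨ c ≤ δ0 ^ (q - (d : ℝ) / lam)) ∧ c' ≤ δ0 :=
  stmt5_general d hd q lam M rstar B hq hlam hM hr hB hlq
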